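/- Let S = (S^{(1)}, ..., S^{(n)}) be a group-like element of the truncated tensor algebra over an algebraically closed field K of characteristic 0 whose coordinates σ_I are all nonzero. Then S is uniquely determined by its top component T = S^{(n)} together with a choice of an n-th root of n!·σ_{11...1}; consequently the projection from G_{d,n} to the degree-n component is generically n-to-1. Over ℝ, the map is generically 1-to-1 when n is odd and 2-to-1 when n is even. -/

import Mathlib

open scoped BigOperators

section TruncatedTensorAlgebra

variable {K : Type*} [Field K] {d : ℕ}

/-- Concatenation (tensor) product on the tensor algebra, modelled as functions on words. -/
def tmul (f g : List (Fin d) → K) : List (Fin d) → K :=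
  fun l => ∑ i ∈ Finset.range (l.length + 1), f (l.take i) * g (l.drop i)

/-- Truncation: kill all coordinates indexed by words of length `> n`. -/
def trunc (n : ℕ) (f : List (Fin d) → K) : List (Fin d) → K :=
  fun l => if l.length ≤ n then f l else 0

/-- The product of the truncated tensor algebra `T^n(K^d)`. -/
def tmulT (n : ℕ) (f g : List (Fin d) → K) : List (Fin d) → K :=
  trunc n (tmul f g)

/-- The Lie bracket `[f,g] = f ⊗ g - g ⊗ f` in the truncated tensor algebra. -/
def lieT (n : ℕ) (f g : List (Fin d) → K) : List (Fin d) → K :=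
  tmulT n f g - tmulT n g f

/-- The generator `e_i` of the tensor algebra. -/
def gen (i : Fin d) : List (Fin d) → K := fun l => if l = [i] then 1 else 0

/-- The unit `1` of the tensor algebra. -/
def tone : List (Fin d) → K := fun l => if l = [] then 1 else 0

/-- `InLie d n K P` says that `P` belongs to the free Lie algebra `Lie^n(K^d)`, the
smallest Lie subalgebra of `T^n(K^d)` containing the generators `e_1, …, e_d`. -/
inductive InLie (d n : ℕ) (K : Type*) [Field K] : (List (Fin d) → K) → Prop
  | gen (i : Fin d) : InLie d n K (gen i)
  | zero : InLie d n K 0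
  | add {f g : List (Fin d) → K} : InLie d n K f → InLie d n K g → InLie d n K (f + g)
  | smul (c : K) {f : List (Fin d) → K} : InLie d n K f → InLie d n K (c • f)
  | bracket {f g : List (Fin d) → K} :
      InLie d n K f → InLie d n K g → InLie d n K (lieT n f g)

/-- Powers in the truncated tensor algebra. -/
def powT (n : ℕ) (f : List (Fin d) → K) : ℕ → (List (Fin d) → K)
  | 0 => tone
  | r + 1 => tmulT n f (powT n f r)

/-- The tensor exponential `exp(f) = ∑ f^{⊗ r}/r!` in `T^n(K^d)`. -/
noncomputable def texp (n : ℕ) (f : List (Fin d) → K) : List (Fin d) → K :=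
  ∑ r ∈ Finset.range (n + 1), ((r.factorial : K)⁻¹) • powT n f r

/-- The tensor logarithm `log(1 + Q) = ∑_{r ≥ 1} (-1)^{r-1} Q^{⊗ r}/r` in `T^n(K^d)`. -/
noncomputable def tlog (n : ℕ) (f : List (Fin d) → K) : List (Fin d) → K :=
  ∑ r ∈ Finset.Icc 1 n, (((-1 : K) ^ (r - 1)) / (r : K)) • powT n (f - tone) r

/-- The multiset of shuffles (interleavings) of two words. -/
def shuffles {α : Type*} : List α → List α → Multiset (List α)
  | [], l => {l}
  | l, [] => {l}
  | a :: as, b :: bs =>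
      ((shuffles as (b :: bs)).map (a :: ·)) + ((shuffles (a :: as) bs).map (b :: ·))
  termination_by l₁ l₂ => l₁.length + l₂.length
  decreasing_by
    all_goals simp only [List.length_cons]
    all_goals omega

/-- The shuffle linear form `σ_{I ⧢ J}` evaluated on a tensor `P`. -/
def shuffleForm (P : List (Fin d) → K) (I J : List (Fin d)) : K :=
  ((shuffles I J).map P).sum

end TruncatedTensorAlgebra

/-- A word is a Lyndon word if it is nonempty and strictly lexicographically smaller
than each of its proper rotations. -/
def IsLyndon {α : Type*} [LinearOrder α] (l : List α) : Prop :=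
  l ≠ [] ∧ ∀ k : ℕ, 0 < k → k < l.length → l < l.rotate k

open Classical in
/-- The length of the longest proper Lyndon suffix of a word. -/
noncomputable def suffixLen {d : ℕ} (l : List (Fin d)) : ℕ :=
  Nat.findGreatest (fun j => IsLyndon (l.drop (l.length - j))) (l.length - 1)

/-- Fuel-based recursion computing the Lyndon bracketing `b(I)`:
`b(i) = e_i` and `b(I) = [b(I₁), b(I₂)]` where `I = I₁I₂` with `I₂` the longest proper
Lyndon right factor of `I`. -/
noncomputable def bracketingFuel (K : Type*) [Field K] {d : ℕ} (n : ℕ) :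
    ℕ → List (Fin d) → (List (Fin d) → K)
  | _, [i] => gen i
  | fuel + 1, l =>
      let m := min (max 1 (suffixLen l)) (l.length - 1)
      lieT n (bracketingFuel K n fuel (l.take (l.length - m)))
             (bracketingFuel K n fuel (l.drop (l.length - m)))
  | 0, _ => 0

/-- The Lyndon bracketing `b(I)` of a word `I`, as an element of `T^n(K^d)`. -/
noncomputable def bracketing (K : Type*) [Field K] {d : ℕ} (n : ℕ) (l : List (Fin d)) :
    List (Fin d) → K :=
  bracketingFuel K n l.length l

/-- Group-like elements of the truncated tensor algebra `T^n(K^d)`: constant term `1`,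
truncated beyond degree `n`, and multiplicative under shuffle forms. -/
def GroupLikeT (d n : ℕ) (K : Type*) [Field K] (S : List (Fin d) → K) : Prop :=
  S [] = 1 ∧ (∀ l : List (Fin d), n < l.length → S l = 0) ∧
  ∀ I J : List (Fin d), I.length + J.length ≤ n → shuffleForm S I J = S I * S J

/-! Since `n! σ_{i⋯i} = σ_i^n` and `σ_I σ_i = σ_{I ⧢ i}` is a linear form in coordinates of degree
`|I| + 1`, two group-like elements with the same top component have `σ_i^n` in common and, once
`σ_i` agrees and is nonzero, agree in every degree by downward induction. Conversely the dilations
`σ_I ↦ c^{|I|} σ_I` with `c^n = 1` preserve group-likeness and the top component, so the fibre of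
the projection to the top component is a torsor under the `n`-th roots of unity. -/

section Shuffles

variable {α : Type*}

theorem shuffles_nil_left (l : List α) : shuffles [] l = {l} := by
  cases l <;> rw [shuffles]

theorem shuffles_nil_right (l : List α) : shuffles l [] = {l} := by
  cases l <;> simp [shuffles]

theorem shuffles_cons_cons (a b : α) (as bs : List α) :
    shuffles (a :: as) (b :: bs) =
      (shuffles as (b :: bs)).map (a :: ·) + (shuffles (a :: as) bs).map (b :: ·) := by
  rw [shuffles]

theorem length_of_mem_shuffles {I J w : List α} (hw : w ∈ shuffles I J) :
    w.length = I.length + J.length := by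
  induction I generalizing J w with
  | nil => simp_all [shuffles_nil_left]
  | cons a as ihI =>
    induction J generalizing w with
    | nil => simp_all [shuffles_nil_right]
    | cons b bs ihJ =>
      rw [shuffles_cons_cons, Multiset.mem_add] at hw
      rcases hw with hw | hw <;> obtain ⟨v, hv, rfl⟩ := Multiset.mem_map.1 hw
      · simp [ihI hv]; omega
      · simp [ihJ hv]; omega

theorem shuffles_replicate_singleton (i : α) (k : ℕ) :
    shuffles (List.replicate k i) [i] = Multiset.replicate (k + 1) (List.replicate (k + 1) i) := by
  induction k with
  | zero => simp [shuffles_nil_left]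
  | succ k ih =>
    rw [List.replicate_succ, shuffles_cons_cons, shuffles_nil_right, ih]
    simp only [Multiset.map_replicate, Multiset.map_singleton, ← List.replicate_succ]
    rw [Multiset.replicate_succ _ (k + 1), ← Multiset.singleton_add, add_comm]

end Shuffles

section GroupLike

variable {K : Type*} [Field K] {d n : ℕ}

theorem shuffleForm_congr {P Q : List (Fin d) → K} (I J : List (Fin d))
    (h : ∀ w : List (Fin d), w.length = I.length + J.length → P w = Q w) :
    shuffleForm P I J = shuffleForm Q I J :=
  congrArg Multiset.sum <| Multiset.map_congr rfl fun _ hw => h _ (length_of_mem_shuffles hw)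

theorem shuffleForm_replicate_singleton (P : List (Fin d) → K) (i : Fin d) (k : ℕ) :
    shuffleForm P (List.replicate k i) [i] = (k + 1) * P (List.replicate (k + 1) i) := by
  simp [shuffleForm, shuffles_replicate_singleton]
  ring

theorem GroupLikeT.pow_singleton {S : List (Fin d) → K} (hS : GroupLikeT d n K S) (i : Fin d)
    {k : ℕ} (hk : k ≤ n) : S [i] ^ k = k.factorial * S (List.replicate k i) := by
  induction k with
  | zero => simp [hS.1]
  | succ k ih =>
    have hmul := hS.2.2 (List.replicate k i) [i] (by simp; omega)
    rw [shuffleForm_replicate_singleton] at hmul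
    rw [pow_succ, ih (by omega), mul_assoc, ← hmul, Nat.factorial_succ]
    push_cast
    ring

theorem GroupLikeT.pow_singleton_eq_of_top_eq {S S' : List (Fin d) → K}
    (hS : GroupLikeT d n K S) (hS' : GroupLikeT d n K S') (i : Fin d)
    (htop : ∀ l : List (Fin d), l.length = n → S l = S' l) : S [i] ^ n = S' [i] ^ n := by
  rw [hS.pow_singleton i le_rfl, hS'.pow_singleton i le_rfl, htop _ List.length_replicate]

theorem GroupLikeT.eq_of_top_eq {S S' : List (Fin d) → K}
    (hS : GroupLikeT d n K S) (hS' : GroupLikeT d n K S') {i : Fin d} (hi : S [i] ≠ 0)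
    (htop : ∀ l : List (Fin d), l.length = n → S l = S' l) (heq : S [i] = S' [i]) :
    S = S' := by
  suffices h : ∀ k, ∀ l : List (Fin d), n ≤ l.length + k → S l = S' l from
    funext fun l => h n l (by omega)
  intro k
  induction k with
  | zero =>
    intro l hl
    rcases hl.eq_or_lt with hl | hl
    · exact htop l hl.symm
    · rw [hS.2.1 l hl, hS'.2.1 l hl]
  | succ k ih =>
    intro l hl
    by_cases hlk : n ≤ l.length + k
    · exact ih l hlk
    have hl1 : l.length + [i].length ≤ n := by simp; omega
    have hform : shuffleForm S l [i] = shuffleForm S' l [i] :=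
      shuffleForm_congr l [i] fun w hw => ih w (by simp at hw; omega)
    rw [hS.2.2 l [i] hl1, hS'.2.2 l [i] hl1, ← heq] at hform
    exact mul_right_cancel₀ hi hform

def dilate (c : K) (S : List (Fin d) → K) : List (Fin d) → K :=
  fun l => c ^ l.length * S l

theorem shuffleForm_dilate (c : K) (S : List (Fin d) → K) (I J : List (Fin d)) :
    shuffleForm (dilate c S) I J = c ^ (I.length + J.length) * shuffleForm S I J := by
  rw [shuffleForm, shuffleForm, ← Multiset.sum_map_mul_left]
  exact congrArg Multiset.sum <| Multiset.map_congr rfl fun _ hw => by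
    rw [dilate, length_of_mem_shuffles hw]

theorem GroupLikeT.dilate {S : List (Fin d) → K} (hS : GroupLikeT d n K S) (c : K) :
    GroupLikeT d n K (dilate c S) := by
  refine ⟨by simp [_root_.dilate, hS.1], fun l hl => by simp [_root_.dilate, hS.2.1 l hl],
    fun I J hIJ => ?_⟩
  rw [shuffleForm_dilate, hS.2.2 I J hIJ, pow_add]
  simp only [_root_.dilate]
  ring

theorem dilate_injective {S : List (Fin d) → K} {i : Fin d} (hi : S [i] ≠ 0) :
    Function.Injective fun c : K => dilate c S :=
  fun c₁ c₂ h => mul_right_cancel₀ hi (by simpa [dilate] using congrFun h [i])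

def topFiber (d n : ℕ) (K : Type*) [Field K] (S : List (Fin d) → K) : Set (List (Fin d) → K) :=
  {S' | GroupLikeT d n K S' ∧ ∀ l : List (Fin d), l.length = n → S' l = S l}

theorem topFiber_eq_image_dilate (hn : 0 < n) {S : List (Fin d) → K} (hS : GroupLikeT d n K S)
    {i : Fin d} (hi : S [i] ≠ 0) :
    topFiber d n K S = (fun c => dilate c S) '' {c : K | c ^ n = 1} := by
  ext S'
  constructor
  · rintro ⟨hS', htop⟩
    have hpow := hS.pow_singleton_eq_of_top_eq hS' i fun l hl => (htop l hl).symm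
    have hc : (S' [i] / S [i]) ^ n = 1 := by
      rw [div_pow, ← hpow, div_self (pow_ne_zero n hi)]
    have hi' : S' [i] ≠ 0 := ne_zero_pow hn.ne' (hpow ▸ pow_ne_zero n hi)
    refine ⟨S' [i] / S [i], hc, (hS'.eq_of_top_eq (hS.dilate _) hi' ?_ ?_).symm⟩
    · intro l hl
      simp [dilate, hl, hc, htop l hl]
    · simp [dilate, hi]
  · rintro ⟨c, hc, rfl⟩
    exact ⟨hS.dilate c, fun l hl => by simp [dilate, hl, hc.out]⟩

theorem ncard_topFiber (hn : 0 < n) {S : List (Fin d) → K} (hS : GroupLikeT d n K S)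
    {i : Fin d} (hi : S [i] ≠ 0) :
    (topFiber d n K S).ncard = {c : K | c ^ n = 1}.ncard := by
  rw [topFiber_eq_image_dilate hn hS hi, (dilate_injective hi).injOn.ncard_image]

end GroupLike

theorem IsAlgClosed.ncard_pow_eq_one (K : Type*) [Field K] [IsAlgClosed K] [CharZero K] {n : ℕ}
    (hn : 0 < n) : {c : K | c ^ n = 1}.ncard = n := by
  have : NeZero (n : K) := ⟨Nat.cast_ne_zero.mpr hn.ne'⟩
  obtain ⟨ζ, hζ⟩ := HasEnoughRootsOfUnity.exists_primitiveRoot K n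
  have hroots : {c : K | c ^ n = 1} = ↑(Polynomial.nthRootsFinset n (1 : K)) := by
    ext c
    simp [Polynomial.mem_nthRootsFinset hn]
  rw [hroots, Set.ncard_coe_finset, hζ.card_nthRootsFinset]

theorem Real.ncard_pow_eq_one {n : ℕ} (hn : 0 < n) :
    {c : ℝ | c ^ n = 1}.ncard = if Odd n then 1 else 2 := by
  rcases Nat.even_or_odd n with hev | hodd
  · have hroots : {c : ℝ | c ^ n = 1} = {1, -1} := by
      ext c
      simp [pow_eq_one_iff_of_ne_zero hn.ne', hev]
    rw [hroots, if_neg (Nat.not_odd_iff_even.mpr hev), Set.ncard_pair (by norm_num)]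
  · have hroots : {c : ℝ | c ^ n = 1} = {1} := by
      ext c
      simp [pow_eq_one_iff_of_ne_zero hn.ne', Nat.not_even_iff_odd.mpr hodd]
    rw [hroots, if_pos hodd, Set.ncard_singleton]

/-- A group-like element `S` with all coordinates nonzero is uniquely determined by its
top (degree `n`) component together with the choice of the coordinate `σ₁` (an `n`-th
root of `n!·σ_{1⋯1}`); consequently the projection from `G_{d,n}` to the degree-`n`
component is generically `n`-to-`1` over an algebraically closed field of characteristic
zero, and over `ℝ` it is generically `1`-to-`1` for odd `n` and `2`-to-`1` for even `n`. -/
theorem grouplike_determined_by_top (K : Type*) [Field K] [IsAlgClosed K] [CharZero K]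
    (d n : ℕ) [NeZero d] (hn : 1 ≤ n) :
    (∀ S S' : List (Fin d) → K, GroupLikeT d n K S → GroupLikeT d n K S' →
      (∀ l : List (Fin d), l.length ≤ n → S l ≠ 0) →
      (∀ l : List (Fin d), l.length = n → S l = S' l) →
      S [(0 : Fin d)] = S' [(0 : Fin d)] → S = S') ∧
    (∀ S : List (Fin d) → K, GroupLikeT d n K S →
      (∀ l : List (Fin d), l.length ≤ n → S l ≠ 0) →
      Set.ncard {S' : List (Fin d) → K | GroupLikeT d n K S' ∧
        ∀ l : List (Fin d), l.length = n → S' l = S l} = n) ∧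
    (∀ S : List (Fin d) → ℝ, GroupLikeT d n ℝ S →
      (∀ l : List (Fin d), l.length ≤ n → S l ≠ 0) →
      Set.ncard {S' : List (Fin d) → ℝ | GroupLikeT d n ℝ S' ∧
        ∀ l : List (Fin d), l.length = n → S' l = S l} = if Odd n then 1 else 2) := by
  refine ⟨fun S S' hS hS' hS0 htop h0 => hS.eq_of_top_eq hS' (hS0 _ hn) htop h0,
    fun S hS hS0 => ?_, fun S hS hS0 => ?_⟩
  · exact (ncard_topFiber hn hS (hS0 [0] hn)).trans (IsAlgClosed.ncard_pow_eq_one K hn)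
  · exact (ncard_topFiber hn hS (hS0 [0] hn)).trans (Real.ncard_pow_eq_one hn)
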